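/- The half-kink q(x) = (1 - x⁴)/(1 + x⁴) is the unique global minimizer of the energy E[w] = ∫₀¹ ((1/4)w_x² + (1/x²)(1-w²)²) x dx among smooth functions w on (0,1] with w(0) = 1 and w(1) = 0: E[w] ≥ 2/3 with equality if and only if w = q. -/

import Mathlib

open Set MeasureTheory intervalIntegral Real



lemma hasDerivAt_halfKink (x : ℝ) :
    HasDerivAt (fun y : ℝ => (1 - y^4)/(1+y^4)) (-8*x^3/(1+x^4)^2) x := by
  have h1 : (0:ℝ) < 1 + x^4 := by positivity
  have hu : HasDerivAt (fun y:ℝ => 1 - y^4) (-(4*x^3)) x := by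
    simpa using ((hasDerivAt_pow 4 x).const_sub 1)
  have hv : HasDerivAt (fun y:ℝ => 1 + y^4) (4*x^3) x := by
    simpa using ((hasDerivAt_pow 4 x).const_add 1)
  have := hu.div hv h1.ne'
  refine this.congr_deriv ?_
  field_simp
  ring


set_option maxHeartbeats 1000000 in
lemma eq_zero_of_integral_eq_zero {f : ℝ → ℝ}
    (hint : IntervalIntegrable f volume 0 1)
    (hnn : ∀ x ∈ Set.Ioc (0:ℝ) 1, 0 ≤ f x)
    (hzero : ∫ x in (0:ℝ)..1, f x = 0)
    {x₀ : ℝ} (hx₀ : x₀ ∈ Set.Ioo (0:ℝ) 1) (hc : ContinuousAt f x₀) :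
    f x₀ = 0 := by
  by_contra hne
  have hpos : 0 < f x₀ := lt_of_le_of_ne (hnn x₀ (Ioo_subset_Ioc_self hx₀)) (Ne.symm hne)
  have hae : (∀ᵐ x ∂(volume.restrict (Ioc (0:ℝ) 1)), 0 ≤ f x) :=
    (ae_restrict_iff' measurableSet_Ioc).2 (ae_of_all _ hnn)
  have hint' : IntegrableOn f (Ioc (0:ℝ) 1) volume := hint.1
  rw [intervalIntegral.integral_of_le (by norm_num : (0:ℝ) ≤ 1)] at hzero
  have heq : f =ᵐ[volume.restrict (Ioc (0:ℝ) 1)] 0 :=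
    (MeasureTheory.integral_eq_zero_iff_of_nonneg_ae hae hint').1 hzero
  have hnull : volume {x | ¬ (x ∈ Ioc (0:ℝ) 1 → f x = 0)} = 0 := by
    have := (ae_restrict_iff' measurableSet_Ioc).1 heq
    simpa [MeasureTheory.ae_iff] using this
  have hev : {y | y ∈ Ioo (0:ℝ) 1 ∧ 0 < f y} ∈ nhds x₀ := by
    filter_upwards [isOpen_Ioo.eventually_mem hx₀,
      hc.eventually_mem (isOpen_Ioi.mem_nhds hpos)] with y h1 h2
    exact ⟨h1, h2⟩
  have hsub : {y | y ∈ Ioo (0:ℝ) 1 ∧ 0 < f y} ⊆ {x | ¬ (x ∈ Ioc (0:ℝ) 1 → f x = 0)} := by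
    rintro y ⟨hy1, hy2⟩
    intro h
    exact absurd (h (Ioo_subset_Ioc_self hy1)) hy2.ne'
  have := measure_mono_null hsub hnull
  have hposmeas : 0 < volume {y | y ∈ Ioo (0:ℝ) 1 ∧ 0 < f y} :=
    MeasureTheory.Measure.measure_pos_of_nonempty_interior _
      ⟨x₀, mem_interior_iff_mem_nhds.2 hev⟩
  exact absurd this hposmeas.ne'

set_option maxHeartbeats 1000000 in
/-- The half-kink `q(x) = (1-x⁴)/(1+x⁴)` is the unique global minimizer of the energy
among smooth `w` with `w(0) = 1` and `w(1) = 0`: one has `E[w] ≥ 2/3`, with equality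
if and only if `w = q` on `(0,1]`. -/
theorem halfKink_unique_minimizer (w : ℝ → ℝ) (hw : ContDiff ℝ (⊤ : ℕ∞) w)
    (h0 : w 0 = 1) (h1 : w 1 = 0) :
    2 / 3 ≤ (∫ x in (0:ℝ)..1, ((1/4) * deriv w x ^ 2 + (1 - w x ^ 2) ^ 2 / x ^ 2) * x) ∧
    ((∫ x in (0:ℝ)..1, ((1/4) * deriv w x ^ 2 + (1 - w x ^ 2) ^ 2 / x ^ 2) * x) = 2 / 3 ↔
      ∀ x ∈ Set.Ioc (0:ℝ) 1, w x = (1 - x ^ 4) / (1 + x ^ 4)) := by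
  have hwd : Differentiable ℝ w := hw.differentiable (by simp)
  have hdc : Continuous (deriv w) := hw.continuous_deriv (by simp)
  set F : ℝ → ℝ := fun x => ((1/4) * deriv w x ^ 2 + (1 - w x ^ 2) ^ 2 / x ^ 2) * x with hF
  set p : ℝ → ℝ := fun x => deriv w x * (1 - w x ^ 2) with hp
  set H : ℝ → ℝ := fun x => (1/2) * deriv w x * x + (1 - w x ^ 2) with hH
  have hid : ∀ x : ℝ, x ≠ 0 → F x + p x = H x ^ 2 / x := by
    intro x hx; simp only [hF, hp, hH]; field_simp; ring
  -- bounds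
  obtain ⟨C1, hC1⟩ := (isCompact_Icc : IsCompact (Icc (0:ℝ) 1)).exists_bound_of_continuousOn
    hdc.continuousOn
  obtain ⟨M, hM⟩ := (isCompact_Icc : IsCompact (Icc (0:ℝ) 1)).exists_bound_of_continuousOn
    hw.continuous.continuousOn
  have h01 : (0:ℝ) ∈ Icc (0:ℝ) 1 := by norm_num
  have hC1' : 0 ≤ C1 := le_trans (norm_nonneg _) (hC1 0 h01)
  have hM' : 0 ≤ M := le_trans (norm_nonneg _) (hM 0 h01)
  have hlip : ∀ x ∈ Icc (0:ℝ) 1, |1 - w x| ≤ C1 * x := by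
    intro x hx
    have := Convex.norm_image_sub_le_of_norm_deriv_le (fun y _ => hwd y) hC1
      (convex_Icc 0 1) h01 hx
    rw [Real.norm_eq_abs, Real.norm_eq_abs, h0] at this
    rw [abs_sub_comm] at this
    simpa [abs_of_nonneg hx.1] using this
  have hFb : ∀ x ∈ Ioc (0:ℝ) 1, |F x| ≤ (1/4)*C1^2 + (C1*(1+M))^2 := by
    intro x hx
    have hx0 : 0 < x := hx.1
    have hx1 : x ≤ 1 := hx.2
    have hxI : x ∈ Icc (0:ℝ) 1 := ⟨hx0.le, hx1⟩
    have hd : |deriv w x| ≤ C1 := hC1 x hxI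
    have hwb : |w x| ≤ M := hM x hxI
    have hA : |1 - w x ^ 2| ≤ C1 * x * (1 + M) := by
      have h1' : |1 - w x| ≤ C1 * x := hlip x hxI
      have h2' : |1 + w x| ≤ 1 + M := (abs_add_le 1 (w x)).trans (by simp; linarith)
      calc |1 - w x ^ 2| = |1 - w x| * |1 + w x| := by rw [← abs_mul]; ring_nf
        _ ≤ (C1 * x) * (1 + M) :=
            mul_le_mul h1' h2' (abs_nonneg _) (by positivity)
    have hFx : F x = (1/4)*(deriv w x)^2*x + (1 - w x^2)^2/x := by
      simp only [hF]; field_simp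
    have hFnn : 0 ≤ F x := by
      simp only [hF]; positivity
    rw [abs_of_nonneg hFnn, hFx]
    have e1 : (1/4)*(deriv w x)^2 * x ≤ (1/4)*C1^2 := by
      have : (deriv w x)^2 ≤ C1^2 := sq_le_sq' (abs_le.1 hd).1 (abs_le.1 hd).2
      nlinarith [sq_nonneg (deriv w x)]
    have e2 : (1 - w x^2)^2 / x ≤ (C1*(1+M))^2 := by
      rw [div_le_iff₀ hx0]
      have hA2 : (1 - w x ^ 2)^2 ≤ (C1 * x * (1 + M))^2 :=
        sq_le_sq' (abs_le.1 hA).1 (abs_le.1 hA).2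
      nlinarith [sq_nonneg (C1*(1+M))]
    linarith
  -- integrability
  have hmeas : Measurable F := by
    apply Measurable.mul _ measurable_id
    apply Measurable.add
    · exact measurable_const.mul ((hdc.measurable).pow_const 2)
    · exact ((continuous_const.sub (hw.continuous.pow 2)).pow 2).measurable.div
        (measurable_id.pow_const 2)
  have hFint : IntervalIntegrable F volume 0 1 := by
    rw [intervalIntegrable_iff, uIoc_of_le (by norm_num : (0:ℝ) ≤ 1)]
    exact Measure.integrableOn_of_bounded measure_Ioc_lt_top.ne
      hmeas.aestronglyMeasurable
      ((ae_restrict_iff' measurableSet_Ioc).2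
        (ae_of_all _ fun x hx => by simpa [Real.norm_eq_abs] using hFb x hx))
  have hpc : Continuous p := hdc.mul (continuous_const.sub (hw.continuous.pow 2))
  have hpint : IntervalIntegrable p volume 0 1 := hpc.intervalIntegrable 0 1
  have hP : ∀ x ∈ uIcc (0:ℝ) 1, HasDerivAt (fun y => w y - w y ^ 3 / 3) (p x) x := by
    intro x _
    have hwx : HasDerivAt w (deriv w x) x := (hwd x).hasDerivAt
    have := hwx.sub ((hwx.pow 3).div_const 3)
    refine this.congr_deriv ?_
    simp only [hp]; ring
  have hFTC : ∫ x in (0:ℝ)..1, p x = -(2/3) := by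
    rw [intervalIntegral.integral_eq_sub_of_hasDerivAt hP hpint]
    rw [h0, h1]; norm_num
  have hsplit : (∫ x in (0:ℝ)..1, F x) = (∫ x in (0:ℝ)..1, (F x + p x)) + 2/3 := by
    rw [intervalIntegral.integral_add hFint hpint, hFTC]; ring
  have hGnn : ∀ u ∈ Icc (0:ℝ) 1, 0 ≤ F u + p u := by
    intro u hu
    rcases eq_or_lt_of_le hu.1 with h | h
    · simp [hF, hp, ← h, h0]
    · rw [hid u h.ne']
      positivity
  have hI0 : 0 ≤ ∫ x in (0:ℝ)..1, (F x + p x) :=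
    intervalIntegral.integral_nonneg (by norm_num) hGnn
  -- continuity of H and F+p away from 0
  have hHc : Continuous H := by
    exact ((continuous_const.mul hdc).mul continuous_id).add
      (continuous_const.sub (hw.continuous.pow 2))
  have hGc : ∀ x : ℝ, x ≠ 0 → ContinuousAt (fun y => F y + p y) x := by
    intro x hx
    apply ContinuousAt.add _ hpc.continuousAt
    apply ContinuousAt.mul _ continuousAt_id
    apply ContinuousAt.add
    · exact continuousAt_const.mul (hdc.continuousAt.pow 2)
    · exact ContinuousAt.div
        ((continuous_const.sub (hw.continuous.pow 2)).pow 2).continuousAt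
        (continuousAt_id.pow 2) (pow_ne_zero 2 hx)
  -- the ODE from equality
  have hODE : (∫ x in (0:ℝ)..1, (F x + p x)) = 0 → ∀ x ∈ Ioc (0:ℝ) 1, H x = 0 := by
    intro hzero
    have hIoo : ∀ x ∈ Ioo (0:ℝ) 1, H x = 0 := by
      intro x hx
      have hx0 : x ≠ 0 := ne_of_gt hx.1
      have hz : F x + p x = 0 :=
        eq_zero_of_integral_eq_zero (hFint.add hpint)
          (fun u hu => hGnn u (Ioc_subset_Icc_self hu)) hzero hx (hGc x hx0)
      rw [hid x hx0] at hz
      rcases div_eq_zero_iff.1 hz with h' | h'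
      · exact pow_eq_zero_iff (by norm_num) |>.1 h'
      · exact absurd h' hx0
    have hclos : EqOn H (fun _ => 0) (closure (Ioo (0:ℝ) 1)) :=
      Set.EqOn.closure (fun x hx => hIoo x hx) hHc continuous_const
    intro x hx
    have : x ∈ closure (Ioo (0:ℝ) 1) := by
      rw [closure_Ioo (by norm_num : (0:ℝ) ≠ 1)]
      exact Ioc_subset_Icc_self hx
    exact hclos this
  -- derivative of phi
  set φ : ℝ → ℝ := fun x => (1 - w x) - x^4 * (1 + w x) with hφ
  have hφd : ∀ x : ℝ,
      HasDerivAt φ (-(1 + x^4) * deriv w x - 4*x^3*(1 + w x)) x := by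
    intro x
    have hwx : HasDerivAt w (deriv w x) x := (hwd x).hasDerivAt
    have h4 : HasDerivAt (fun y : ℝ => y^4) (4*x^3) x := by
      simpa using hasDerivAt_pow 4 x
    have := (hwx.const_sub 1).sub (h4.mul (hwx.const_add 1))
    refine this.congr_deriv ?_
    ring
  have hφ1 : φ 1 = 0 := by simp [hφ, h1]
  -- Gronwall: phi vanishes on Ioc 0 1 given the ODE
  have hφ0 : (∀ x ∈ Ioc (0:ℝ) 1, H x = 0) → ∀ a ∈ Ioc (0:ℝ) 1, φ a = 0 := by
    intro hode a ha
    have ha0 : 0 < a := ha.1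
    have ha1 : a ≤ 1 := ha.2
    set K : ℝ := 2*(1+M)/a with hK
    set ψ : ℝ → ℝ := fun t => φ (1 - t) with hψ
    have hψd : ∀ t : ℝ, HasDerivAt ψ
        (-(-(1 + (1-t)^4) * deriv w (1-t) - 4*(1-t)^3*(1 + w (1-t)))) t := by
      intro t
      have := (hφd (1-t)).comp t ((hasDerivAt_id t).const_sub 1)
      refine this.congr_deriv ?_
      ring
    have key : ∀ t ∈ Ico (0:ℝ) (1-a), ‖(fun s => -(-(1 + (1-s)^4) * deriv w (1-s)
        - 4*(1-s)^3*(1 + w (1-s)))) t‖ ≤ K * ‖ψ t‖ + 0 := by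
      intro t ht
      set x := 1 - t with hx
      have hxm : x ∈ Ioc (0:ℝ) 1 := by
        constructor
        · have := ht.2; simp only [hx]; linarith
        · have := ht.1; simp only [hx]; linarith
      have hx0 : 0 < x := hxm.1
      have hax : a ≤ x := by
        have := ht.2; simp only [hx]; linarith
      have hder : deriv w x = 2*(w x^2 - 1)/x := by
        have hh := hode x hxm
        simp only [hH] at hh
        field_simp
        linear_combination 2 * hh
      have hidφ : -(1 + x^4) * deriv w x - 4*x^3*(1 + w x)
          = (2*(1 + w x)/x) * φ x := by
        rw [hder]
        simp only [hφ]
        field_simp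
        ring
      have hψt : ψ t = φ x := rfl
      rw [hψt]
      have : ‖(-(-(1 + x^4) * deriv w x - 4*x^3*(1 + w x)))‖
          = |2*(1 + w x)/x| * ‖φ x‖ := by
        rw [norm_neg, hidφ, Real.norm_eq_abs, Real.norm_eq_abs, abs_mul]
      rw [this, add_zero]
      apply mul_le_mul_of_nonneg_right _ (norm_nonneg _)
      have hwb : |w x| ≤ M := hM x (Ioc_subset_Icc_self hxm)
      have h2' : |1 + w x| ≤ 1 + M := (abs_add_le 1 (w x)).trans (by simp; linarith)
      rw [abs_div, abs_mul]
      have hxabs : |x| = x := abs_of_pos hx0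
      rw [hxabs]
      rw [div_le_iff₀ hx0, hK]
      have h2M : (0:ℝ) ≤ 1 + M := by linarith
      have : 2*(1+M)/a * x ≥ 2*(1+M)/a * a := by
        apply mul_le_mul_of_nonneg_left hax (by positivity)
      have heq' : 2*(1+M)/a * a = 2*(1+M) := by field_simp
      have habs2 : |(2:ℝ)| = 2 := by norm_num
      rw [habs2]
      nlinarith [abs_nonneg (1 + w x)]
    have hcont : ContinuousOn ψ (Icc 0 (1-a)) :=
      (Continuous.continuousOn (by
        have : Continuous φ := by
          exact (continuous_const.sub hw.continuous).sub
            ((continuous_id.pow 4).mul (continuous_const.add hw.continuous))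
        exact this.comp (continuous_const.sub continuous_id)))
    have := norm_le_gronwallBound_of_norm_deriv_right_le (δ := 0) (ε := 0) (K := K) hcont
      (fun t ht => (hψd t).hasDerivWithinAt)
      (by rw [show ψ 0 = φ 1 by norm_num [hψ]]; simp [hφ1]) key
      (1-a) (by constructor <;> linarith)
    rw [gronwallBound_ε0_δ0] at this
    have : ψ (1-a) = 0 := norm_le_zero_iff.1 this
    simpa [hψ] using this
  constructor
  · rw [hsplit]; linarith [hI0]
  constructor
  · intro heq
    have hI0z : (∫ x in (0:ℝ)..1, (F x + p x)) = 0 := by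
      rw [hsplit] at heq; linarith
    intro x hx
    have hφx := hφ0 (hODE hI0z) x hx
    have h4 : (0:ℝ) < 1 + x^4 := by positivity
    rw [eq_div_iff h4.ne']
    simp only [hφ] at hφx
    linear_combination -hφx
  · intro hqe
    have hz : ∀ x ∈ Ioo (0:ℝ) 1, F x + p x = 0 := by
      intro x hx
      have hx0 : (0:ℝ) < x := hx.1
      have hd : deriv w x = -8*x^3/(1+x^4)^2 := by
        have hev : w =ᶠ[nhds x] (fun y => (1 - y^4)/(1+y^4)) := by
          filter_upwards [isOpen_Ioo.eventually_mem hx] with y hy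
          exact hqe y (Ioo_subset_Ioc_self hy)
        rw [hev.deriv_eq, (hasDerivAt_halfKink x).deriv]
      have hwx : w x = (1-x^4)/(1+x^4) := hqe x (Ioo_subset_Ioc_self hx)
      rw [hid x (ne_of_gt hx0)]
      have hz' : H x = 0 := by
        simp only [hH]
        rw [hd, hwx]
        have h4 : (0:ℝ) < 1 + x^4 := by positivity
        field_simp
        ring
      rw [hz']
      simp
    have hI0' : (∫ x in (0:ℝ)..1, (F x + p x)) = 0 := by
      rw [intervalIntegral.integral_of_le (by norm_num : (0:ℝ) ≤ 1),
        MeasureTheory.integral_Ioc_eq_integral_Ioo,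
        MeasureTheory.setIntegral_congr_fun measurableSet_Ioo
          (fun x hx => hz x hx : EqOn (fun x => F x + p x) (fun _ => (0:ℝ)) (Ioo 0 1))]
      simp
    rw [hsplit, hI0']
    norm_num
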